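/- (Lower bound on the node certainty index.) For every node k ∈ {1,…,n}, the node certainty index satisfies μ_k ≥ 2nλ₂/(n − 1), where λ₂ is the smallest positive eigenvalue of L; equivalently, Σ_{p=2}^n (u_k⁽ᵖ⁾)²/(2λ_p) ≤ (n − 1)/(2nλ₂). -/

import Mathlib

open Finset Matrix

/-!
The eigenvector components `u p k` form an orthogonal matrix, so its columns are unit vectors
as well: `∑ₚ (u p k)² = 1`. The constant eigenvector contributes `1/n` to this sum, leaving mass
`1 - 1/n` for the remaining eigenvectors, each of whose weights `1/(2λ_p)` is at most `1/(2λ₂)`.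
-/

theorem sum_sq_apply_eq_one_of_orthonormal {ι R : Type*} [Fintype ι] [DecidableEq ι] [CommRing R]
    {u : ι → ι → R} (horth : ∀ p q, ∑ j, u p j * u q j = if p = q then 1 else 0) (k : ι) :
    ∑ p, u p k ^ 2 = 1 := by
  have hrows : of u * (of u)ᵀ = 1 := by
    ext p q
    simpa [mul_apply, one_apply] using horth p q
  have hcols : ((of u)ᵀ * of u) k k = 1 := by rw [mul_eq_one_comm.mp hrows, one_apply_eq]
  simpa [mul_apply, sq] using hcols

theorem sum_erase_sq_apply_of_orthonormal {ι R : Type*} [Fintype ι] [DecidableEq ι] [CommRing R]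
    {u : ι → ι → R} (horth : ∀ p q, ∑ j, u p j * u q j = if p = q then 1 else 0)
    {i₀ : ι} {c : R} (hc : u i₀ = fun _ => c) (k : ι) :
    ∑ p ∈ univ.erase i₀, u p k ^ 2 = 1 - c ^ 2 := by
  rw [← sum_sq_apply_eq_one_of_orthonormal horth k, ← add_sum_erase _ _ (mem_univ i₀), hc]
  ring

theorem sum_div_le_sum_div_of_le {ι : Type*} {s : Finset ι} {a b : ι → ℝ} {m : ℝ}
    (ha : ∀ p ∈ s, 0 ≤ a p) (hm : 0 < m) (hb : ∀ p ∈ s, m ≤ b p) :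
    ∑ p ∈ s, a p / b p ≤ (∑ p ∈ s, a p) / m := by
  rw [sum_div]
  exact sum_le_sum fun p hp => div_le_div_of_nonneg_left (ha p hp) hm (hb p hp)

theorem node_certainty_index_lower_bound
    (n : ℕ) [NeZero n] (hn : 2 ≤ n)
    (lam : Fin n → ℝ) (u : Fin n → Fin n → ℝ)
    (hlampos : ∀ p : Fin n, p ≠ 0 → 0 < lam p)
    (hmono : Monotone lam)
    (horth : ∀ p q : Fin n, ∑ j, u p j * u q j = if p = q then (1 : ℝ) else 0)
    (hu0 : u 0 = fun _ => 1 / Real.sqrt n)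
    (k : Fin n) (μ : ℝ) (hμpos : 0 < μ)
    (hμ : 1 / μ = ∑ p ∈ Finset.univ.erase (0 : Fin n), (u p k) ^ 2 / (2 * lam p)) :
    2 * (n : ℝ) * lam (⟨1, by omega⟩ : Fin n) / ((n : ℝ) - 1) ≤ μ := by
  set p₁ : Fin n := ⟨1, by omega⟩
  have hn₁ : (0 : ℝ) < n - 1 := by
    have : (2 : ℝ) ≤ n := by exact_mod_cast hn
    linarith
  have hlam₁ : 0 < lam p₁ := hlampos p₁ (by simp [p₁, Fin.ext_iff])
  have hmass : ∑ p ∈ univ.erase 0, u p k ^ 2 = 1 - 1 / n := by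
    rw [sum_erase_sq_apply_of_orthonormal horth hu0 k, div_pow, Real.sq_sqrt n.cast_nonneg,
      one_pow]
  have hinv : 1 / μ ≤ (n - 1) / (2 * n * lam p₁) := by
    calc 1 / μ ≤ (∑ p ∈ univ.erase 0, u p k ^ 2) / (2 * lam p₁) := by
          rw [hμ]
          refine sum_div_le_sum_div_of_le (fun p _ => sq_nonneg _) (by positivity) fun p hp => ?_
          have hp₁ : p₁ ≤ p := Fin.pos_iff_ne_zero.mpr (ne_of_mem_erase hp)
          linarith [hmono hp₁]
      _ = (n - 1) / (2 * n * lam p₁) := by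
          rw [hmass]
          field_simp
  rwa [one_div_le hμpos (by positivity), one_div_div] at hinv
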